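/- arXiv:0804.3259 — 5 statements merged into one kernel-verified Lean document; each statement's English description precedes it below -/
import Mathlib

section
/- Fix positive channel gains h₁,…,h_K and nonnegative rates R₁,…,R_K for a K-user deterministic SISO Gaussian MAC. Define, for a permutation π of {1,…,K}, the powers p_{π(k)} = (exp(2∑_{i=1}^{k} R_{π(i)}) - exp(2∑_{i=1}^{k-1} R_{π(i)}))/h_{π(k)}. Then for every nonempty subset J ⊆ {1,…,K}, ∑_{k∈J} R_k ≤ (1/2)log(1 + ∑_{k∈J} h_k p_k); that is, the power vector p supports the rate vector R in the MAC capacity region. -/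
open Finset

lemma aux_exp_sum (K : ℕ) (f : Fin K → ℝ) (hf : ∀ i, 0 ≤ f i) (s : Finset (Fin K)) :
    Real.exp (2 * ∑ k ∈ s, f k) ≤
      1 + ∑ k ∈ s, (Real.exp (2 * ∑ i ∈ univ.filter (fun i => i ≤ k), f i) -
        Real.exp (2 * ∑ i ∈ univ.filter (fun i => i < k), f i)) := by
  induction s using Finset.induction_on_max with
  | empty => simp
  | insert a s hmax ih =>
    have ha : a ∉ s := fun hc => lt_irrefl a (hmax a hc)
    rw [Finset.sum_insert ha, Finset.sum_insert ha]
    have hsplit : (univ.filter (fun i => i ≤ a) : Finset (Fin K)) =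
        insert a (univ.filter (fun i => i < a)) := by
      ext i
      simp [le_iff_lt_or_eq, or_comm]
    have hterm : Real.exp (2 * ∑ i ∈ univ.filter (fun i => i ≤ a), f i) -
        Real.exp (2 * ∑ i ∈ univ.filter (fun i => i < a), f i) =
        Real.exp (2 * ∑ i ∈ univ.filter (fun i => i < a), f i) *
          (Real.exp (2 * f a) - 1) := by
      rw [hsplit, Finset.sum_insert (by simp)]
      rw [mul_sub, ← Real.exp_add]
      ring_nf
    have hsub : s ⊆ univ.filter (fun i => i < a) := fun x hx => by
      simp [hmax x hx]
    have hle : ∑ k ∈ s, f k ≤ ∑ i ∈ univ.filter (fun i => i < a), f i :=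
      Finset.sum_le_sum_of_subset_of_nonneg hsub (fun i _ _ => hf i)
    have h1 : Real.exp (2 * ∑ k ∈ s, f k) * (Real.exp (2 * f a) - 1) ≤
        Real.exp (2 * ∑ i ∈ univ.filter (fun i => i < a), f i) *
          (Real.exp (2 * f a) - 1) := by
      apply mul_le_mul_of_nonneg_right
      · exact Real.exp_le_exp.mpr (by linarith)
      · have := Real.one_le_exp (by nlinarith [hf a] : (0:ℝ) ≤ 2 * f a)
        linarith
    have h2 : Real.exp (2 * (f a + ∑ k ∈ s, f k)) =
        Real.exp (2 * ∑ k ∈ s, f k) * Real.exp (2 * f a) := by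
      rw [← Real.exp_add]; ring_nf
    rw [hterm]
    nlinarith [ih, h1, h2]

/-- K-user deterministic SISO Gaussian MAC: the successive-decoding powers under
decoding order `π` support the rate vector `R` in the MAC capacity region. -/
theorem stmt_1 (K : ℕ) (h R p : Fin K → ℝ) (π : Equiv.Perm (Fin K))
    (hh : ∀ k, 0 < h k) (hR : ∀ k, 0 ≤ R k)
    (hp : ∀ k : Fin K, p (π k) =
      (Real.exp (2 * ∑ i ∈ univ.filter (fun i => i ≤ k), R (π i)) -
       Real.exp (2 * ∑ i ∈ univ.filter (fun i => i < k), R (π i))) / h (π k)) :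
    ∀ J : Finset (Fin K), J.Nonempty →
      ∑ k ∈ J, R k ≤ (1 / 2) * Real.log (1 + ∑ k ∈ J, h k * p k) := by
  intro J _
  set J' : Finset (Fin K) := J.map π.symm.toEmbedding with hJ'
  have hJeq : J = J'.map π.toEmbedding := by
    rw [hJ', Finset.map_map]
    ext x
    simp
  have hsumR : ∑ k ∈ J, R k = ∑ k ∈ J', R (π k) := by
    rw [hJeq, Finset.sum_map]; rfl
  have hsumP : ∑ k ∈ J, h k * p k = ∑ k ∈ J',
      (Real.exp (2 * ∑ i ∈ univ.filter (fun i => i ≤ k), R (π i)) -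
       Real.exp (2 * ∑ i ∈ univ.filter (fun i => i < k), R (π i))) := by
    rw [hJeq, Finset.sum_map]
    apply Finset.sum_congr rfl
    intro k _
    show h (π k) * p (π k) = _
    rw [hp k, mul_div_cancel₀ _ (hh (π k)).ne']
  have key := aux_exp_sum K (fun i => R (π i)) (fun i => hR (π i)) J'
  have hpos : (0:ℝ) < 1 + ∑ k ∈ J, h k * p k := by
    rw [hsumP]
    calc (0:ℝ) < Real.exp (2 * ∑ k ∈ J', R (π k)) := Real.exp_pos _
    _ ≤ _ := key
  have hlog : 2 * ∑ k ∈ J', R (π k) ≤ Real.log (1 + ∑ k ∈ J, h k * p k) :=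
    (Real.le_log_iff_exp_le hpos).2 (by rw [hsumP]; exact key)
  rw [hsumR]
  linarith
end

section
/- The set C_SDMA({S_k}) = {r ∈ ℝ₊^K : ∑_{k∈J} r_k ≤ g(J) for all J ⊆ {1,…,K}}, where g(J) = E_ν[(1/2) log det(∑_{k∈J} H_k(ν) S_k H_k(ν)† + I)], is a polymatroid; i.e., g is normalized (g(∅)=0), monotone nondecreasing, and submodular on subsets of {1,…,K}. -/
open scoped Matrix ComplexOrder
open MeasureTheory Finset

namespace SDMAAux
open Matrix

variable {n : Type*} [Fintype n] [DecidableEq n]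

lemma det_one_add_psd {N : Matrix n n ℂ} (hN : N.PosSemidef) :
    (1 + N).det = ((∏ i, (1 + hN.1.eigenvalues i) : ℝ) : ℂ) := by
  set U : Matrix n n ℂ := (hN.1.eigenvectorUnitary : Matrix n n ℂ) with hUdef
  have hU : U * star U = 1 := Matrix.mem_unitaryGroup_iff.mp hN.1.eigenvectorUnitary.2
  have h1 : (1 : Matrix n n ℂ) + N =
      U * (1 + Matrix.diagonal (RCLike.ofReal ∘ hN.1.eigenvalues)) * star U := by
    conv_lhs => rw [hN.1.spectral_theorem, Unitary.conjStarAlgAut_apply]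
    rw [Matrix.mul_add, Matrix.add_mul, Matrix.mul_one, hU]
  rw [h1, det_mul, det_mul, mul_comm U.det, mul_assoc, ← det_mul, hU, det_one, mul_one]
  rw [← Matrix.diagonal_one, Matrix.diagonal_add, det_diagonal]
  push_cast
  simp [Pi.add_apply]

lemma one_le_det_re {N : Matrix n n ℂ} (hN : N.PosSemidef) :
    1 ≤ (1 + N).det.re ∧ (1 + N).det.im = 0 := by
  rw [det_one_add_psd hN]
  refine ⟨?_, Complex.ofReal_im _⟩
  rw [Complex.ofReal_re]
  calc (1:ℝ) = ∏ _i : n, (1:ℝ) := by simp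
  _ ≤ ∏ i : n, (1 + hN.1.eigenvalues i) :=
    Finset.prod_le_prod (fun i _ => zero_le_one)
      (fun i _ => by linarith [hN.eigenvalues_nonneg i])

lemma posdef_det {X : Matrix n n ℂ} (hX : X.PosDef) :
    0 < X.det.re ∧ X.det.im = 0 := by
  have h := hX.det_pos
  rw [Complex.lt_def] at h
  exact ⟨by simpa using h.1, h.2.symm⟩

section SqrtPort
open scoped MatrixOrder

noncomputable def _root_.Matrix.PosSemidef.sqrt {A : Matrix n n ℂ} (_hA : A.PosSemidef) :
    Matrix n n ℂ :=
  CFC.sqrt A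

lemma _root_.Matrix.PosSemidef.posSemidef_sqrt {A : Matrix n n ℂ} (hA : A.PosSemidef) :
    hA.sqrt.PosSemidef :=
  Matrix.nonneg_iff_posSemidef.mp (CFC.sqrt_nonneg A)

lemma _root_.Matrix.PosSemidef.sqrt_mul_self {A : Matrix n n ℂ} (hA : A.PosSemidef) :
    hA.sqrt * hA.sqrt = A :=
  CFC.sqrt_mul_sqrt_self A (Matrix.nonneg_iff_posSemidef.mpr hA)

end SqrtPort

lemma sqrt_herm {X : Matrix n n ℂ} (hX : X.PosDef) :
    (hX.inv.posSemidef.sqrt)ᴴ = hX.inv.posSemidef.sqrt :=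
  hX.inv.posSemidef.posSemidef_sqrt.isHermitian

lemma conj_psd {X : Matrix n n ℂ} (hX : X.PosDef) {P : Matrix n n ℂ}
    (hP : P.PosSemidef) :
    (hX.inv.posSemidef.sqrt * P * hX.inv.posSemidef.sqrt).PosSemidef := by
  have := hP.mul_mul_conjTranspose_same hX.inv.posSemidef.sqrt
  rwa [sqrt_herm hX] at this

lemma det_factor {X P : Matrix n n ℂ} (hX : X.PosDef) (hP : P.PosSemidef) :
    (X + P).det = X.det *
      (1 + hX.inv.posSemidef.sqrt * P * hX.inv.posSemidef.sqrt).det := by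
  set Q := hX.inv.posSemidef.sqrt with hQdef
  have hQQ : Q * Q = X⁻¹ := hX.inv.posSemidef.sqrt_mul_self
  have hdet : X.det ≠ 0 := fun h => by simpa [h] using (posdef_det hX).1
  have hXu : IsUnit X.det := isUnit_iff_ne_zero.2 hdet
  have h1 : X + P = X * (1 + X⁻¹ * P) := by
    rw [mul_add, mul_one, ← mul_assoc, Matrix.mul_nonsing_inv _ hXu, one_mul]
  rw [h1, det_mul, ← hQQ, mul_assoc Q Q P, det_one_add_mul_comm]


lemma det_re_mono {X P : Matrix n n ℂ} (hX : X.PosDef) (hP : P.PosSemidef) :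
    X.det.re ≤ (X + P).det.re := by
  obtain ⟨hx, hxim⟩ := posdef_det hX
  have hpsd := conj_psd hX hP
  obtain ⟨h1, h2⟩ := one_le_det_re hpsd
  rw [det_factor hX hP, Complex.mul_re, hxim, h2]
  simp only [mul_zero, zero_mul, sub_zero]
  exact le_mul_of_one_le_right hx.le h1

/-- `Q * X * Q = 1` where `Q` is the square root of `X⁻¹`. -/
lemma sqrt_inv_conj {X : Matrix n n ℂ} (hX : X.PosDef) :
    hX.inv.posSemidef.sqrt * X * hX.inv.posSemidef.sqrt = 1 := by
  set Q := hX.inv.posSemidef.sqrt with hQdef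
  have hQQ : Q * Q = X⁻¹ := hX.inv.posSemidef.sqrt_mul_self
  have hdet : X.det ≠ 0 := fun h => by simpa [h] using (posdef_det hX).1
  have hXu : IsUnit X.det := isUnit_iff_ne_zero.2 hdet
  have hQu : IsUnit Q.det := by
    have hXiu : IsUnit X⁻¹.det := isUnit_iff_ne_zero.2
      (fun h => by simpa [h] using (posdef_det hX.inv).1)
    rw [← hQQ, det_mul] at hXiu
    exact isUnit_of_mul_isUnit_left hXiu
  have hXe : X = (Q * Q)⁻¹ := by rw [hQQ, Matrix.nonsing_inv_nonsing_inv _ hXu]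
  rw [hXe, Matrix.mul_inv_rev,
    show Q * (Q⁻¹ * Q⁻¹) * Q = (Q * Q⁻¹) * (Q⁻¹ * Q) by noncomm_ring,
    Matrix.mul_nonsing_inv _ hQu, Matrix.nonsing_inv_mul _ hQu, one_mul]

lemma sqrt_inv_sub {B : Matrix n n ℂ} (hB : B.PosSemidef)
    (hX : (1 + B).PosDef) :
    hX.inv.posSemidef.sqrt * B * hX.inv.posSemidef.sqrt = 1 - (1 + B)⁻¹ := by
  set Q := hX.inv.posSemidef.sqrt with hQdef
  have hQQ : Q * Q = (1 + B)⁻¹ := hX.inv.posSemidef.sqrt_mul_self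
  have h := sqrt_inv_conj hX
  rw [mul_add, mul_one, add_mul, hQQ] at h
  linear_combination (norm := module) h

/-- Key submodularity inequality: `det(1+B+C) ≤ det(1+B) * det(1+C)` for PSD `B`, `C`. -/
lemma det_re_one_add_add {B C : Matrix n n ℂ} (hB : B.PosSemidef) (hC : C.PosSemidef) :
    (1 + B + C).det.re ≤ (1 + B).det.re * (1 + C).det.re := by
  have hX : (1 + B).PosDef := Matrix.PosDef.one.add_posSemidef hB
  set Q := hX.inv.posSemidef.sqrt with hQdef
  have hQQ : Q * Q = (1 + B)⁻¹ := hX.inv.posSemidef.sqrt_mul_self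
  have key : (1 + Q * C * Q).det.re ≤ (1 + C).det.re := by
    set W := hC.sqrt with hWdef
    have hWW : W * W = C := hC.sqrt_mul_self
    have hWH : Wᴴ = W := hC.posSemidef_sqrt.isHermitian
    have hMpsd : (W * (1 + B)⁻¹ * W).PosSemidef := by
      have := hX.inv.posSemidef.mul_mul_conjTranspose_same W
      rwa [hWH] at this
    have h2 : (1 + W * (1 + B)⁻¹ * W).PosDef := Matrix.PosDef.one.add_posSemidef hMpsd
    have e1 : (1 + Q * C * Q).det = (1 + W * (1 + B)⁻¹ * W).det := by
      have a1 : Q * C * Q = (Q * W) * (W * Q) := by rw [← hWW]; noncomm_ring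
      have a2 : W * (1 + B)⁻¹ * W = (W * Q) * (Q * W) := by rw [← hQQ]; noncomm_ring
      rw [a1, a2, det_one_add_mul_comm]
    have h3 : (1 + W * (1 + B)⁻¹ * W) + W * (Q * B * Q) * W = 1 + C := by
      rw [sqrt_inv_sub hB hX]
      have : W * (1 - (1 + B)⁻¹) * W = W * W - W * (1 + B)⁻¹ * W := by noncomm_ring
      rw [this, hWW]; abel
    have hWQW : (W * (Q * B * Q) * W).PosSemidef := by
      have hqbq : (Q * B * Q).PosSemidef := conj_psd hX hB
      have := hqbq.mul_mul_conjTranspose_same W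
      rwa [hWH] at this
    calc (1 + Q * C * Q).det.re = (1 + W * (1 + B)⁻¹ * W).det.re := by rw [e1]
    _ ≤ ((1 + W * (1 + B)⁻¹ * W) + W * (Q * B * Q) * W).det.re := det_re_mono h2 hWQW
    _ = (1 + C).det.re := by rw [h3]
  obtain ⟨hx, hxim⟩ := posdef_det hX
  have him := (one_le_det_re (conj_psd hX hC)).2
  rw [det_factor hX hC, Complex.mul_re, hxim, him]
  simp only [mul_zero, zero_mul, sub_zero]
  exact mul_le_mul_of_nonneg_left key hx.le


lemma log_det_mono {A P : Matrix n n ℂ} (hA : A.PosSemidef) (hP : P.PosSemidef) :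
    Real.log ((A + 1).det.re) ≤ Real.log ((A + P + 1).det.re) := by
  have hX : (A + (1 : Matrix n n ℂ)).PosDef :=
    Matrix.PosDef.posSemidef_add hA Matrix.PosDef.one
  have e : A + P + 1 = (A + 1) + P := by abel
  rw [e]
  exact Real.log_le_log (posdef_det hX).1 (det_re_mono hX hP)

lemma log_det_submod {A B C : Matrix n n ℂ} (hA : A.PosSemidef) (hB : B.PosSemidef)
    (hC : C.PosSemidef) :
    Real.log ((A + B + C + 1).det.re) + Real.log ((A + 1).det.re) ≤
      Real.log ((A + B + 1).det.re) + Real.log ((A + C + 1).det.re) := by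
  have hX : (A + (1 : Matrix n n ℂ)).PosDef :=
    Matrix.PosDef.posSemidef_add hA Matrix.PosDef.one
  set Q := hX.inv.posSemidef.sqrt with hQdef
  have hapos : 0 < (A + 1).det.re := (posdef_det hX).1
  have haim : (A + 1).det.im = 0 := (posdef_det hX).2
  have hQB := conj_psd hX hB
  have hQC := conj_psd hX hC
  have eB : (A + B + 1).det.re = (A + 1).det.re * (1 + Q * B * Q).det.re := by
    have h1 : A + B + 1 = (A + 1) + B := by abel
    rw [h1, det_factor hX hB, Complex.mul_re, haim, (one_le_det_re hQB).2]
    simp [Q]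
  have eC : (A + C + 1).det.re = (A + 1).det.re * (1 + Q * C * Q).det.re := by
    have h1 : A + C + 1 = (A + 1) + C := by abel
    rw [h1, det_factor hX hC, Complex.mul_re, haim, (one_le_det_re hQC).2]
    simp [Q]
  have eBC : (A + B + C + 1).det.re
      = (A + 1).det.re * (1 + Q * B * Q + Q * C * Q).det.re := by
    have h1 : A + B + C + 1 = (A + 1) + (B + C) := by abel
    have h2 : (1 : Matrix n n ℂ) + Q * (B + C) * Q = 1 + Q * B * Q + Q * C * Q := by
      noncomm_ring
    rw [h1, det_factor hX (hB.add hC), h2]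
    have h3 : (1 : Matrix n n ℂ) + Q * B * Q + Q * C * Q
        = 1 + (Q * B * Q + Q * C * Q) := by abel
    rw [h3, Complex.mul_re, haim, (one_le_det_re (hQB.add hQC)).2]
    simp
  have hb1 : 1 ≤ (1 + Q * B * Q).det.re := (one_le_det_re hQB).1
  have hc1 : 1 ≤ (1 + Q * C * Q).det.re := (one_le_det_re hQC).1
  have hs1 : 1 ≤ (1 + Q * B * Q + Q * C * Q).det.re := by
    have h3 : (1 : Matrix n n ℂ) + Q * B * Q + Q * C * Q
        = 1 + (Q * B * Q + Q * C * Q) := by abel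
    rw [h3]
    exact (one_le_det_re (hQB.add hQC)).1
  have hs := det_re_one_add_add hQB hQC
  have hls : Real.log ((1 + Q * B * Q + Q * C * Q).det.re)
      ≤ Real.log ((1 + Q * B * Q).det.re) + Real.log ((1 + Q * C * Q).det.re) := by
    rw [← Real.log_mul (by linarith) (by linarith)]
    exact Real.log_le_log (by linarith) hs
  rw [eB, eC, eBC, Real.log_mul hapos.ne' (by linarith),
    Real.log_mul hapos.ne' (by linarith), Real.log_mul hapos.ne' (by linarith)]
  linarith

end SDMAAux

/-- The rank function `g(J) = E_ν[(1/2) log det(∑_{k∈J} H_k S_k H_kᴴ + I)]`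
of the SDMA rate region is normalized, monotone and submodular (a polymatroid). -/
theorem stmt_3 (K r : ℕ) (t : Fin K → ℕ)
    {Ω : Type*} [MeasurableSpace Ω] (μ : Measure Ω) [IsProbabilityMeasure μ]
    (H : ∀ k : Fin K, Ω → Matrix (Fin r) (Fin (t k)) ℂ)
    (S : ∀ k : Fin K, Matrix (Fin (t k)) (Fin (t k)) ℂ)
    (hS : ∀ k, (S k).PosSemidef)
    (g : Finset (Fin K) → ℝ)
    (hg : ∀ J, g J = ∫ ω, (1 / 2) * Real.log
      ((∑ k ∈ J, H k ω * S k * (H k ω)ᴴ + 1).det.re) ∂μ)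
    (hint : ∀ J : Finset (Fin K), Integrable (fun ω =>
      Real.log ((∑ k ∈ J, H k ω * S k * (H k ω)ᴴ + 1).det.re)) μ) :
    g ∅ = 0 ∧ (∀ J₁ J₂, J₁ ⊆ J₂ → g J₁ ≤ g J₂) ∧
      (∀ J₁ J₂, g (J₁ ∪ J₂) + g (J₁ ∩ J₂) ≤ g J₁ + g J₂) := by
  classical
  have hA : ∀ (J : Finset (Fin K)) (ω : Ω),
      (∑ k ∈ J, H k ω * S k * (H k ω)ᴴ).PosSemidef := fun J ω =>
    Finset.sum_induction _ _ (fun a b ha hb => ha.add hb) .zero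
      (fun k _ => (hS k).mul_mul_conjTranspose_same (H k ω))
  refine ⟨?_, ?_, ?_⟩
  · rw [hg]
    simp
  · intro J₁ J₂ h
    rw [hg, hg]
    refine integral_mono ((hint J₁).const_mul _) ((hint J₂).const_mul _) fun ω => ?_
    have e : ∑ k ∈ J₂, H k ω * S k * (H k ω)ᴴ
        = ∑ k ∈ J₁, H k ω * S k * (H k ω)ᴴ + ∑ k ∈ J₂ \ J₁, H k ω * S k * (H k ω)ᴴ := by
      rw [← Finset.sum_sdiff h]
      exact add_comm _ _
    simp only [e]
    exact mul_le_mul_of_nonneg_left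
      (SDMAAux.log_det_mono (hA J₁ ω) (hA (J₂ \ J₁) ω)) (by norm_num)
  · intro J₁ J₂
    rw [hg, hg, hg, hg]
    rw [← integral_add ((hint (J₁ ∪ J₂)).const_mul _) ((hint (J₁ ∩ J₂)).const_mul _),
        ← integral_add ((hint J₁).const_mul _) ((hint J₂).const_mul _)]
    refine integral_mono
      (((hint (J₁ ∪ J₂)).const_mul _).add ((hint (J₁ ∩ J₂)).const_mul _))
      (((hint J₁).const_mul _).add ((hint J₂).const_mul _)) fun ω => ?_
    have e1 : ∑ k ∈ J₁, H k ω * S k * (H k ω)ᴴ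
        = ∑ k ∈ J₁ ∩ J₂, H k ω * S k * (H k ω)ᴴ
          + ∑ k ∈ J₁ \ J₂, H k ω * S k * (H k ω)ᴴ := by
      have h := Finset.sum_sdiff (f := fun k => H k ω * S k * (H k ω)ᴴ)
        (Finset.inter_subset_left (s₁ := J₁) (s₂ := J₂))
      rw [Finset.sdiff_inter_self_left] at h
      rw [← h]
      exact add_comm _ _
    have e2 : ∑ k ∈ J₂, H k ω * S k * (H k ω)ᴴ
        = ∑ k ∈ J₁ ∩ J₂, H k ω * S k * (H k ω)ᴴ
          + ∑ k ∈ J₂ \ J₁, H k ω * S k * (H k ω)ᴴ := by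
      have h := Finset.sum_sdiff (f := fun k => H k ω * S k * (H k ω)ᴴ)
        (Finset.inter_subset_right (s₁ := J₁) (s₂ := J₂))
      have hd : J₂ \ (J₁ ∩ J₂) = J₂ \ J₁ := by
        ext x; simp only [Finset.mem_sdiff, Finset.mem_inter]; tauto
      rw [hd] at h
      rw [← h]
      exact add_comm _ _
    have e3 : ∑ k ∈ J₁ ∪ J₂, H k ω * S k * (H k ω)ᴴ
        = ∑ k ∈ J₁ ∩ J₂, H k ω * S k * (H k ω)ᴴ
          + ∑ k ∈ J₁ \ J₂, H k ω * S k * (H k ω)ᴴ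
          + ∑ k ∈ J₂ \ J₁, H k ω * S k * (H k ω)ᴴ := by
      have h : ∑ k ∈ (J₁ ∪ J₂) \ J₁, H k ω * S k * (H k ω)ᴴ
          + ∑ k ∈ J₁, H k ω * S k * (H k ω)ᴴ
          = ∑ k ∈ J₁ ∪ J₂, H k ω * S k * (H k ω)ᴴ :=
        Finset.sum_sdiff (Finset.subset_union_left (s₁ := J₁) (s₂ := J₂))
      rw [Finset.union_sdiff_left] at h
      rw [← h, e1]
      abel
    simp only [e1, e2, e3]
    have h := SDMAAux.log_det_submod (hA (J₁ ∩ J₂) ω) (hA (J₁ \ J₂) ω) (hA (J₂ \ J₁) ω)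
    linarith
end

section
/- For positive semidefinite n×n complex matrices A, B with A + I and B + I (hence all convex combinations plus I) positive definite, define f(β) = log det(βA + (1-β)B + I) - β log det(A + I) - (1-β) log det(B + I) for β ∈ [0,1]. If f(β) = 0 for all β ∈ [0,1], then A = B. -/
open scoped Matrix ComplexOrder
open Matrix

private lemma smulPSD {n : ℕ} {A : Matrix (Fin n) (Fin n) ℂ} (hA : A.PosSemidef) {t : ℝ}
    (ht : 0 ≤ t) : ((t : ℂ) • A).PosSemidef := by
  apply Matrix.PosSemidef.of_dotProduct_mulVec_nonneg
  · show ((t:ℂ) • A)ᴴ = _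
    rw [conjTranspose_smul, hA.1.eq]
    norm_num
  · intro x
    rw [smul_mulVec, dotProduct_smul, smul_eq_mul]
    exact mul_nonneg (by exact_mod_cast ht) (hA.dotProduct_mulVec_nonneg x)

private lemma posDefConj {n : ℕ} {M N : Matrix (Fin n) (Fin n) ℂ} (hM : M.PosDef)
    (hN : IsUnit N.det) : (Nᴴ * M * N).PosDef := by
  refine Matrix.PosDef.of_dotProduct_mulVec_pos (isHermitian_conjTranspose_mul_mul N hM.1) fun x hx => ?_
  have key : star x ⬝ᵥ (Nᴴ * M * N) *ᵥ x = star (N *ᵥ x) ⬝ᵥ M *ᵥ (N *ᵥ x) := by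
    rw [star_mulVec, ← mulVec_mulVec, ← mulVec_mulVec, dotProduct_mulVec]
  rw [key]
  refine hM.dotProduct_mulVec_pos fun h => hx ?_
  have inj := (Matrix.mulVec_injective_iff_isUnit (A := N)).mpr ((isUnit_iff_isUnit_det N).mpr hN)
  exact inj (by simpa using h)

/-- Equality in the concavity of `log det` along the whole segment between
`A + I` and `B + I` forces `A = B`. -/
theorem stmt_5 (n : ℕ) (A B : Matrix (Fin n) (Fin n) ℂ)
    (hA : A.PosSemidef) (hB : B.PosSemidef)
    (hA1 : (A + 1).PosDef) (hB1 : (B + 1).PosDef)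
    (f : ℝ → ℝ)
    (hf : ∀ β : ℝ, f β =
      Real.log ((((β : ℂ) • A + (((1 - β : ℝ)) : ℂ) • B + 1)).det.re)
      - β * Real.log ((A + 1).det.re) - (1 - β) * Real.log ((B + 1).det.re))
    (hzero : ∀ β ∈ Set.Icc (0 : ℝ) 1, f β = 0) :
    A = B := by
  classical
  have hBps := hB1.posSemidef
  set C := (open scoped MatrixOrder in CFC.sqrt (B + 1)) with hCdef
  have hCps : C.PosSemidef := by
    open scoped MatrixOrder in exact (CFC.sqrt_nonneg (B + 1)).posSemidef
  have hCH : C.IsHermitian := hCps.1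
  have hCC : C * C = B + 1 := by
    open scoped MatrixOrder in exact CFC.sqrt_mul_sqrt_self (B + 1) hBps.nonneg
  have hdetB1 : (0:ℂ) < (B+1).det := hB1.det_pos
  have hdet : IsUnit C.det := by
    have h1 : C.det * C.det = (B + 1).det := by rw [← Matrix.det_mul, hCC]
    have h2 : (B + 1).det ≠ 0 := hdetB1.ne'
    exact isUnit_iff_ne_zero.mpr (fun h => h2 (by rw [← h1, h, mul_zero]))
  have hCiC : C⁻¹ * C = 1 := Matrix.nonsing_inv_mul _ hdet
  have hCCi : C * C⁻¹ = 1 := Matrix.mul_nonsing_inv _ hdet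
  set D := A - B with hDdef
  have hDH : D.IsHermitian := hA.1.sub hB.1
  set E := C⁻¹ * D * C⁻¹ with hEdef
  have hCiH : (C⁻¹)ᴴ = C⁻¹ := by rw [Matrix.conjTranspose_nonsing_inv, hCH.eq]
  have hEH : E.IsHermitian := by
    show Eᴴ = E
    rw [hEdef, Matrix.conjTranspose_mul, Matrix.conjTranspose_mul, hCiH, hDH.eq, Matrix.mul_assoc]
  have hCEC : C * E * C = D := by
    calc C * (C⁻¹ * D * C⁻¹) * C = (C * C⁻¹) * (D * (C⁻¹ * C)) := by
          simp only [Matrix.mul_assoc]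
      _ = D := by rw [hCiC, hCCi, one_mul, mul_one]
  -- factorization of the segment
  have hfac : ∀ t : ℝ, C * ((1 : Matrix (Fin n) (Fin n) ℂ) + (t:ℂ) • E) * C
      = (t:ℂ) • A + ((1 - t : ℝ) : ℂ) • B + 1 := by
    intro t
    have h1 : C * ((1 : Matrix (Fin n) (Fin n) ℂ) + (t:ℂ) • E) * C
        = C * C + (t:ℂ) • (C * E * C) := by
      rw [mul_add, add_mul, mul_one, Matrix.mul_smul, Matrix.smul_mul]
    rw [h1, hCC, hCEC, hDdef]
    push_cast
    module
  have hfac' : ∀ t : ℝ, (1 : Matrix (Fin n) (Fin n) ℂ) + (t:ℂ) • E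
      = C⁻¹ * ((t:ℂ) • A + ((1 - t : ℝ) : ℂ) • B + 1) * C⁻¹ := by
    intro t
    rw [← hfac t]
    calc (1 : Matrix (Fin n) (Fin n) ℂ) + (t:ℂ) • E
        = (C⁻¹ * C) * ((1 + (t:ℂ) • E) * (C * C⁻¹)) := by rw [hCiC, hCCi, one_mul, mul_one]
      _ = C⁻¹ * (C * (1 + (t:ℂ) • E) * C) * C⁻¹ := by simp only [Matrix.mul_assoc]
  -- positive definiteness along the segment
  have hMpd : ∀ t ∈ Set.Icc (0:ℝ) 1, ((t:ℂ) • A + ((1 - t : ℝ) : ℂ) • B + 1).PosDef := by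
    intro t ht
    exact Matrix.PosDef.posSemidef_add
      ((smulPSD hA ht.1).add (smulPSD hB (by linarith [ht.2]))) Matrix.PosDef.one
  have hdetCi : IsUnit (C⁻¹).det := by
    rw [Matrix.det_nonsing_inv]
    exact isUnit_ringInverse.mpr hdet
  have hEpd : ∀ t ∈ Set.Icc (0:ℝ) 1,
      ((1 : Matrix (Fin n) (Fin n) ℂ) + (t:ℂ) • E).PosDef := by
    intro t ht
    have h8 := posDefConj (hMpd t ht) hdetCi
    rw [hCiH] at h8
    rwa [hfac' t]
  -- spectral theorem for E
  set U : Matrix (Fin n) (Fin n) ℂ := (hEH.eigenvectorUnitary : Matrix (Fin n) (Fin n) ℂ)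
    with hUdef
  set lam : Fin n → ℝ := hEH.eigenvalues with hlamdef
  have hUU : star U * U = 1 := Unitary.coe_star_mul_self hEH.eigenvectorUnitary
  have hUU' : U * star U = 1 := Unitary.coe_mul_star_self hEH.eigenvectorUnitary
  have hdiag : star U * E * U = Matrix.diagonal (RCLike.ofReal ∘ lam) := by
    have h := hEH.conjStarAlgAut_star_eigenvectorUnitary
    rw [Unitary.conjStarAlgAut_star_apply] at h
    exact h
  have hdetU : IsUnit U.det := by
    refine isUnit_iff_ne_zero.mpr fun h => ?_
    have h2 := congrArg Matrix.det hUU'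
    rw [Matrix.det_mul, h, zero_mul, Matrix.det_one] at h2
    exact zero_ne_one h2
  have hconj : ∀ t : ℝ, star U * ((1 : Matrix (Fin n) (Fin n) ℂ) + (t:ℂ) • E) * U
      = Matrix.diagonal (fun i => ((1 + t * lam i : ℝ) : ℂ)) := by
    intro t
    have h1 : star U * ((1 : Matrix (Fin n) (Fin n) ℂ) + (t:ℂ) • E) * U
        = star U * U + (t:ℂ) • (star U * E * U) := by
      rw [mul_add, add_mul, mul_one, Matrix.mul_smul, Matrix.smul_mul]
    rw [h1, hUU, hdiag]
    ext i j
    by_cases hij : i = j <;>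
      simp [hij, Matrix.diagonal_apply, Matrix.one_apply, Matrix.add_apply] <;> push_cast <;> ring
  -- positivity of the eigen-factors
  have hpos : ∀ t ∈ Set.Icc (0:ℝ) 1, ∀ i, 0 < 1 + t * lam i := by
    intro t ht i
    have hpd : (Uᴴ * ((1 : Matrix (Fin n) (Fin n) ℂ) + (t:ℂ) • E) * U).PosDef :=
      posDefConj (hEpd t ht) hdetU
    rw [← Matrix.star_eq_conjTranspose, hconj t] at hpd
    have h4 := (Matrix.posDef_diagonal_iff).mp hpd i
    exact_mod_cast h4
  -- determinant formula along the segment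
  have hdetMt : ∀ t : ℝ, ((t:ℂ) • A + ((1 - t : ℝ) : ℂ) • B + 1).det
      = (B+1).det * ((∏ i, (1 + t * lam i) : ℝ) : ℂ) := by
    intro t
    rw [← hfac t, Matrix.det_mul, Matrix.det_mul]
    have h2 : (star U * ((1 : Matrix (Fin n) (Fin n) ℂ) + (t:ℂ) • E) * U).det
        = ((1 : Matrix (Fin n) (Fin n) ℂ) + (t:ℂ) • E).det := by
      rw [Matrix.det_mul, Matrix.det_mul, mul_comm, ← mul_assoc, ← Matrix.det_mul, hUU',
        Matrix.det_one, one_mul]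
    have h1 : ((1 : Matrix (Fin n) (Fin n) ℂ) + (t:ℂ) • E).det
        = ((∏ i, (1 + t * lam i) : ℝ) : ℂ) := by
      rw [← h2, hconj t, Matrix.det_diagonal]
      push_cast
      ring
    rw [h1]
    have h3 : C.det * C.det = (B+1).det := by rw [← Matrix.det_mul, hCC]
    calc C.det * ((∏ i, (1 + t * lam i) : ℝ) : ℂ) * C.det
        = (C.det * C.det) * ((∏ i, (1 + t * lam i) : ℝ) : ℂ) := by ring
      _ = _ := by rw [h3]
  -- real parts
  have him : (B+1).det = (((B+1).det.re : ℝ) : ℂ) := by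
    have h := hdetB1
    rw [Complex.lt_def] at h
    exact Complex.ext (by simp) (by simp [← h.2])
  have hdre : 0 < (B+1).det.re := by
    have h := hdetB1
    rw [Complex.lt_def] at h
    simpa using h.1
  have hreMt : ∀ t : ℝ, (((t:ℂ) • A + ((1 - t : ℝ) : ℂ) • B + 1).det).re
      = (B+1).det.re * ∏ i, (1 + t * lam i) := by
    intro t
    rw [hdetMt t, him, ← Complex.ofReal_mul]
    exact Complex.ofReal_re _
  have hA1eq : (A + 1).det.re = (B+1).det.re * ∏ i, (1 + 1 * lam i) := by
    have h := hreMt 1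
    have heq : ((1:ℝ):ℂ) • A + ((1 - 1 : ℝ) : ℂ) • B + 1 = A + 1 := by
      norm_num
    rw [heq] at h
    exact h
  -- plug in β = 1/2
  have hhalfpos : ∀ i, 0 < 1 + (1/2 : ℝ) * lam i :=
    hpos (1/2) (by norm_num)
  have honepos : ∀ i, 0 < 1 + 1 * lam i :=
    hpos 1 (by norm_num)
  have hP2pos : 0 < ∏ i, (1 + (1/2:ℝ) * lam i) :=
    Finset.prod_pos fun i _ => hhalfpos i
  have hP1pos : 0 < ∏ i, (1 + 1 * lam i) :=
    Finset.prod_pos fun i _ => honepos i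
  have h0 := hzero (1/2) (by norm_num)
  rw [hf] at h0
  rw [hreMt (1/2), hA1eq] at h0
  rw [Real.log_mul hdre.ne' hP2pos.ne', Real.log_mul hdre.ne' hP1pos.ne'] at h0
  have hsum : (∑ i, (Real.log (1 + (1/2:ℝ) * lam i) - (1/2) * Real.log (1 + 1 * lam i))) = 0 := by
    rw [Finset.sum_sub_distrib, ← Finset.mul_sum,
      ← Real.log_prod (fun i _ => (hhalfpos i).ne'),
      ← Real.log_prod (fun i _ => (honepos i).ne')]
    linarith [h0]
  have hterm : ∀ i ∈ (Finset.univ : Finset (Fin n)),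
      0 ≤ Real.log (1 + (1/2:ℝ) * lam i) - (1/2) * Real.log (1 + 1 * lam i) := by
    intro i _
    have hle : (1 + 1 * lam i) ≤ (1 + (1/2:ℝ) * lam i)^2 := by nlinarith [sq_nonneg (lam i)]
    have h5 := Real.log_le_log (honepos i) hle
    rw [Real.log_pow] at h5
    push_cast at h5
    linarith
  have hall := (Finset.sum_eq_zero_iff_of_nonneg hterm).mp hsum
  have hlam0 : ∀ i, lam i = 0 := by
    intro i
    have h := hall i (Finset.mem_univ i)
    have h2 : Real.log ((1 + (1/2:ℝ) * lam i)^2) = Real.log (1 + 1 * lam i) := by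
      rw [Real.log_pow]
      push_cast
      linarith
    have h3 : (1 + (1/2:ℝ) * lam i)^2 = 1 + 1 * lam i := by
      have h6 := congrArg Real.exp h2
      rwa [Real.exp_log (pow_pos (hhalfpos i) 2), Real.exp_log (honepos i)] at h6
    nlinarith [sq_nonneg (lam i)]
  -- conclude
  have hdiag0 : star U * E * U = 0 := by
    rw [hdiag]
    have h7 : (RCLike.ofReal ∘ lam : Fin n → ℂ) = 0 := by
      funext i
      simp [hlam0 i]
    rw [h7]
    exact Matrix.diagonal_zero
  have hE0 : E = 0 := by
    have h := congrArg (fun X => U * X * star U) hdiag0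
    rw [show U * (star U * E * U) * star U = (U * star U) * E * (U * star U) by
        simp only [Matrix.mul_assoc], hUU', one_mul, mul_one] at h
    rw [h, Matrix.mul_zero, Matrix.zero_mul]
  have hD0 : D = 0 := by
    rw [← hCEC, hE0, Matrix.mul_zero, Matrix.zero_mul]
  exact sub_eq_zero.mp hD0
end

section
/- Under the hypotheses of Theorem 3 (TDMA weighted sum-power minimization with strictly positive weights λ and strictly positive rate targets R), the optimal primal solutions {S*_k}, {τ*_k}, {r*_k} and optimal dual variables {μ*_k} satisfy λ_k p*_k - μ*_k r*_k = c* τ*_k for all k, where p*_k = Tr(S*_k), r*_k = R_k, and c* := ẑ_1(μ*_1) is a constant independent of k. -/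
open scoped Matrix ComplexOrder
open MeasureTheory Finset

/-- Scaling a PSD complex matrix by a nonnegative real keeps it PSD. -/
lemma psd_real_smul {n : ℕ} {M : Matrix (Fin n) (Fin n) ℂ} (hM : M.PosSemidef)
    {c : ℝ} (hc : 0 ≤ c) : ((c : ℂ) • M).PosSemidef := by
  refine ⟨?_, fun x => ?_⟩
  · have h1 : ((c : ℂ) • M)ᴴ = (starRingEnd ℂ) (c : ℂ) • Mᴴ := Matrix.conjTranspose_smul _ _
    rw [Matrix.IsHermitian, h1, hM.1.eq, Complex.conj_ofReal]
  · simp only [Matrix.smul_apply, smul_eq_mul,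
      show ∀ a b d : ℂ, a * ((c : ℂ) * b) * d = (c : ℂ) * (a * b * d) from
        fun a b d => by ring, ← Finsupp.mul_sum]
    exact mul_nonneg (Complex.zero_le_real.2 hc) (hM.2 x)

/-- Theorem 3 (TDMA): optimal primal solutions `{S*_k}, {τ*_k}, {r*_k}` and optimal dual
variables `{μ*_k}` of the TDMA weighted sum-power minimization with strictly positive
weights and rate targets satisfy `λ_k p*_k - μ*_k r*_k = c* τ*_k` with
`c* = ẑ_1(μ*_1)`. -/
theorem stmt_14 (K rx : ℕ) [NeZero K] (t : Fin K → ℕ)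
    {Ω : Type*} [MeasurableSpace Ω] (P : Measure Ω) [IsProbabilityMeasure P]
    (H : ∀ k : Fin K, Ω → Matrix (Fin rx) (Fin (t k)) ℂ)
    (lam R : Fin K → ℝ) (hlam : ∀ k, 0 < lam k) (hR : ∀ k, 0 < R k)
    (rate : ∀ k : Fin K, Matrix (Fin (t k)) (Fin (t k)) ℂ → ℝ)
    (hrate : ∀ k W, rate k W =
      ∫ ω, (1 / 2) * Real.log ((H k ω * W * (H k ω)ᴴ + 1).det.re) ∂P)
    (hint : ∀ (k : Fin K) (W : Matrix (Fin (t k)) (Fin (t k)) ℂ),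
      Integrable (fun ω => Real.log ((H k ω * W * (H k ω)ᴴ + 1).det.re)) P)
    (Feas : (∀ k : Fin K, Matrix (Fin (t k)) (Fin (t k)) ℂ) → (Fin K → ℝ) → Prop)
    (hFeas : ∀ S τ, Feas S τ ↔ (∀ k, (S k).PosSemidef) ∧ (∀ k, 0 ≤ τ k) ∧
      (∑ k, τ k = 1) ∧ ∀ k, R k ≤ τ k * rate k (((τ k : ℂ))⁻¹ • S k))
    (Sstar : ∀ k : Fin K, Matrix (Fin (t k)) (Fin (t k)) ℂ)
    (τstar rstar μstar : Fin K → ℝ)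
    (hfeas : Feas Sstar τstar)
    (hprimal : ∀ S τ, Feas S τ →
      ∑ k, lam k * ((Sstar k).trace.re) ≤ ∑ k, lam k * ((S k).trace.re))
    (hrstar : ∀ k, rstar k = τstar k * rate k (((τstar k : ℂ))⁻¹ • Sstar k))
    (hrstarR : ∀ k, rstar k = R k)
    (zhat : Fin K → ℝ → ℝ)
    (hzhat : ∀ k μv, IsGLB {y : ℝ | ∃ W : Matrix (Fin (t k)) (Fin (t k)) ℂ,
      W.PosSemidef ∧ y = lam k * (W.trace.re) - μv * rate k W} (zhat k μv))
    (g : (Fin K → ℝ) → ℝ)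
    (hg : ∀ μv, IsGLB {y : ℝ |
      ∃ (S : ∀ k : Fin K, Matrix (Fin (t k)) (Fin (t k)) ℂ) (τ : Fin K → ℝ),
        (∀ k, (S k).PosSemidef) ∧ (∀ k, 0 ≤ τ k) ∧ (∑ k, τ k = 1) ∧
        y = ∑ k, lam k * ((S k).trace.re) -
          ∑ k, μv k * (τ k * rate k (((τ k : ℂ))⁻¹ • S k) - R k)} (g μv))
    (hμnn : ∀ k, 0 ≤ μstar k)
    (hdual : ∀ μv : Fin K → ℝ, (∀ k, 0 ≤ μv k) → g μv ≤ g μstar)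
    (hgap : g μstar = ∑ k, lam k * ((Sstar k).trace.re)) :
    ∀ k, lam k * ((Sstar k).trace.re) - μstar k * rstar k =
      zhat 0 (μstar 0) * τstar k := by
  rw [hFeas] at hfeas
  obtain ⟨hSpsd, hτnn, hτsum, hcon⟩ := hfeas
  -- τ*ₖ > 0
  have hτpos : ∀ j, 0 < τstar j := by
    intro j
    rcases (hτnn j).lt_or_eq with h | h
    · exact h
    · exfalso
      have h2 := hcon j
      rw [← h, zero_mul] at h2
      exact absurd h2 (not_le.2 (hR j))
  -- (A): per-index bound  τⱼ ẑⱼ ≤ λⱼ pⱼ − μⱼ Rⱼ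
  have hA : ∀ j, τstar j * zhat j (μstar j) ≤
      lam j * (Sstar j).trace.re - μstar j * R j := by
    intro j
    set W : Matrix (Fin (t j)) (Fin (t j)) ℂ := ((τstar j : ℂ))⁻¹ • Sstar j with hW
    have hWpsd : W.PosSemidef := by
      rw [hW, ← Complex.ofReal_inv]
      exact psd_real_smul (hSpsd j) (inv_nonneg.2 (hτnn j))
    have h1 : zhat j (μstar j) ≤ lam j * W.trace.re - μstar j * rate j W :=
      (hzhat j (μstar j)).1 ⟨W, hWpsd, rfl⟩
    have htr : W.trace.re = (τstar j)⁻¹ * (Sstar j).trace.re := by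
      rw [hW, ← Complex.ofReal_inv, Matrix.trace_smul, smul_eq_mul,
        Complex.re_ofReal_mul]
    have h3 : R j ≤ τstar j * rate j W := hcon j
    have h4 : 0 ≤ μstar j := hμnn j
    have hτ := hτpos j
    have h5 : τstar j * zhat j (μstar j) ≤
        τstar j * (lam j * W.trace.re - μstar j * rate j W) :=
      mul_le_mul_of_nonneg_left h1 hτ.le
    have h6 : τstar j * (lam j * W.trace.re - μstar j * rate j W)
        = lam j * (Sstar j).trace.re - μstar j * (τstar j * rate j W) := by
      rw [htr]; field_simp
    have h7 : μstar j * R j ≤ μstar j * (τstar j * rate j W) :=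
      mul_le_mul_of_nonneg_left h3 h4
    linarith
  -- (B): g μ* ≤ Σ τⱼ ẑⱼ + Σ μⱼ Rⱼ
  have hB : g μstar ≤ (∑ j, τstar j * zhat j (μstar j)) + ∑ j, μstar j * R j := by
    by_contra hcontra
    push_neg at hcontra
    set X := (∑ j, τstar j * zhat j (μstar j)) + ∑ j, μstar j * R j with hX
    set ε := (g μstar - X) / 2 with hε
    have hεpos : 0 < ε := by simp only [hε]; linarith
    have hch : ∀ j : Fin K, ∃ W : Matrix (Fin (t j)) (Fin (t j)) ℂ, W.PosSemidef ∧
        lam j * W.trace.re - μstar j * rate j W < zhat j (μstar j) + ε := by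
      intro j
      obtain ⟨y, hy, -, hlt⟩ :=
        (hzhat j (μstar j)).exists_between (lt_add_of_pos_right _ hεpos)
      obtain ⟨W, hWpsd, rfl⟩ := hy
      exact ⟨W, hWpsd, hlt⟩
    choose W hWpsd hWlt using hch
    set S : ∀ j : Fin K, Matrix (Fin (t j)) (Fin (t j)) ℂ :=
      fun j => ((τstar j : ℂ)) • W j with hS
    have hSpsd' : ∀ j, (S j).PosSemidef := fun j => psd_real_smul (hWpsd j) (hτnn j)
    have hSW : ∀ j, ((τstar j : ℂ))⁻¹ • S j = W j := by
      intro j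
      rw [hS, smul_smul, inv_mul_cancel₀ (Complex.ofReal_ne_zero.mpr (hτpos j).ne'),
        one_smul]
    have hStr : ∀ j, ((S j).trace).re = τstar j * ((W j).trace).re := by
      intro j
      rw [hS, Matrix.trace_smul, smul_eq_mul, Complex.re_ofReal_mul]
    have hle : g μstar ≤ ∑ j, lam j * ((S j).trace).re -
        ∑ j, μstar j * (τstar j * rate j (((τstar j : ℂ))⁻¹ • S j) - R j) :=
      (hg μstar).1 ⟨S, τstar, hSpsd', hτnn, hτsum, rfl⟩
    have hre : ∑ j, lam j * ((S j).trace).re -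
        ∑ j, μstar j * (τstar j * rate j (((τstar j : ℂ))⁻¹ • S j) - R j)
        = (∑ j, τstar j * (lam j * ((W j).trace).re - μstar j * rate j (W j)))
          + ∑ j, μstar j * R j := by
      rw [← Finset.sum_sub_distrib, ← Finset.sum_add_distrib]
      refine Finset.sum_congr rfl fun j _ => ?_
      rw [hSW j, hStr j]; ring
    have hb1 : ∑ j, τstar j * (lam j * ((W j).trace).re - μstar j * rate j (W j))
        ≤ ∑ j, τstar j * (zhat j (μstar j) + ε) :=
      Finset.sum_le_sum fun j _ => mul_le_mul_of_nonneg_left (hWlt j).le (hτnn j)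
    have hb2 : ∑ j, τstar j * (zhat j (μstar j) + ε)
        = (∑ j, τstar j * zhat j (μstar j)) + ε := by
      simp only [mul_add]
      rw [Finset.sum_add_distrib, ← Finset.sum_mul, hτsum, one_mul]
    rw [hre] at hle
    rw [hb2] at hb1
    simp only [hε] at *
    linarith
  -- (Bⱼ): g μ* ≤ ẑⱼ + Σ μᵢ Rᵢ   for every j
  have hBj : ∀ j, g μstar ≤ zhat j (μstar j) + ∑ i, μstar i * R i := by
    intro j
    by_contra hcontra
    push_neg at hcontra
    set X := zhat j (μstar j) + ∑ i, μstar i * R i with hX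
    set ε := (g μstar - X) / 2 with hε
    have hεpos : 0 < ε := by simp only [hε]; linarith
    obtain ⟨y, hy, -, hlt⟩ :=
      (hzhat j (μstar j)).exists_between (lt_add_of_pos_right _ hεpos)
    obtain ⟨W, hWpsd, rfl⟩ := hy
    classical
    set S : ∀ i : Fin K, Matrix (Fin (t i)) (Fin (t i)) ℂ :=
      Function.update (fun i => (0 : Matrix (Fin (t i)) (Fin (t i)) ℂ)) j W with hS
    set τ' : Fin K → ℝ := fun i => if i = j then 1 else 0 with hτ'
    have hSpsd' : ∀ i, (S i).PosSemidef := by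
      intro i
      by_cases h : i = j
      · subst h; rw [hS, Function.update_self]; exact hWpsd
      · rw [hS, Function.update_of_ne h]; exact Matrix.PosSemidef.zero
    have hτ'nn : ∀ i, 0 ≤ τ' i := by
      intro i; rw [hτ']; dsimp only; split <;> norm_num
    have hτ'sum : ∑ i, τ' i = 1 := by
      rw [hτ']; simp
    have hle : g μstar ≤ ∑ i, lam i * ((S i).trace).re -
        ∑ i, μstar i * (τ' i * rate i (((τ' i : ℂ))⁻¹ • S i) - R i) :=
      (hg μstar).1 ⟨S, τ', hSpsd', hτ'nn, hτ'sum, rfl⟩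
    have h1 : ∑ i, lam i * ((S i).trace).re = lam j * (W.trace).re := by
      have : ∀ i, lam i * ((S i).trace).re = if i = j then lam j * (W.trace).re else 0 := by
        intro i
        by_cases h : i = j
        · subst h; rw [hS, Function.update_self, if_pos rfl]
        · rw [hS, Function.update_of_ne h, if_neg h]; simp
      rw [Finset.sum_congr rfl fun i _ => this i]
      simp
    have h2 : ∑ i, μstar i * (τ' i * rate i (((τ' i : ℂ))⁻¹ • S i) - R i)
        = μstar j * rate j W - ∑ i, μstar i * R i := by
      have hterm : ∀ i ∈ Finset.univ,
          μstar i * (τ' i * rate i (((τ' i : ℂ))⁻¹ • S i) - R i)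
          = (if i = j then μstar j * rate j W else 0) - μstar i * R i := by
        intro i _
        by_cases h : i = j
        · subst h
          simp only [hS, hτ', Function.update_self, if_true, eq_self_iff_true,
            Complex.ofReal_one, inv_one, one_smul]
          ring
        · rw [hτ']
          simp only [if_neg h]
          push_cast
          rw [zero_mul, zero_sub, mul_neg, zero_sub]
      rw [Finset.sum_congr rfl hterm, Finset.sum_sub_distrib]
      congr 1
      simp
    rw [h1, h2] at hle
    simp only [hε, hX] at *
    linarith
  -- (C): per-index equality  λⱼ pⱼ − μⱼ Rⱼ = τⱼ ẑⱼ
  have hAsum : ∑ j, ((lam j * (Sstar j).trace.re - μstar j * R j)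
      - τstar j * zhat j (μstar j)) ≤ 0 := by
    rw [Finset.sum_sub_distrib, Finset.sum_sub_distrib]
    linarith [hB, hgap.ge, hgap.le]
  have hAzero : ∀ j ∈ Finset.univ, ((lam j * (Sstar j).trace.re - μstar j * R j)
      - τstar j * zhat j (μstar j)) = 0 := by
    refine (Finset.sum_eq_zero_iff_of_nonneg
      (fun i _ => sub_nonneg.2 (hA i))).1 ?_
    exact le_antisymm hAsum (Finset.sum_nonneg fun i _ => sub_nonneg.2 (hA i))
  have hC : ∀ j, lam j * (Sstar j).trace.re - μstar j * R j
      = τstar j * zhat j (μstar j) := by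
    intro j
    have := hAzero j (Finset.mem_univ j)
    linarith
  -- all the ẑⱼ(μⱼ*) are equal to their τ-average m
  have hmval : ∑ i, τstar i * zhat i (μstar i) = g μstar - ∑ i, μstar i * R i := by
    have h1 : ∑ i, τstar i * zhat i (μstar i)
        = ∑ i, (lam i * (Sstar i).trace.re - μstar i * R i) :=
      (Finset.sum_congr rfl fun i _ => (hC i).symm)
    rw [h1, Finset.sum_sub_distrib, hgap]
  have hm_le : ∀ j, (∑ i, τstar i * zhat i (μstar i)) ≤ zhat j (μstar j) := by
    intro j
    have := hBj j
    linarith [hmval]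
  have hzz : ∀ j, zhat j (μstar j) = ∑ i, τstar i * zhat i (μstar i) := by
    set m := ∑ i, τstar i * zhat i (μstar i) with hme
    have hsum0 : ∑ j, τstar j * (zhat j (μstar j) - m) = 0 := by
      simp only [mul_sub]
      rw [Finset.sum_sub_distrib, ← Finset.sum_mul, hτsum, one_mul, ← hme, sub_self]
    intro j
    have h0 := (Finset.sum_eq_zero_iff_of_nonneg
      (fun i _ => mul_nonneg (hτnn i) (sub_nonneg.2 (hm_le i)))).1 hsum0 j
      (Finset.mem_univ j)
    rcases mul_eq_zero.1 h0 with h | h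
    · exact absurd h (hτpos j).ne'
    · have := sub_eq_zero.1 h
      linarith
  -- conclusion
  intro k
  rw [hrstarR k, hC k, hzz k, ← hzz 0]
  ring
end

section
/- Let Q ⪰ 0 be a t×t Hermitian matrix with eigendecomposition Q = A Λ A†. Consider minimizing f(S) = λ Tr(S) - μ E[ (1/2) log det( H_w Q^{1/2} S Q^{1/2} H_w† + I ) ] over Hermitian S ⪰ 0, where H_w is a random r×t matrix with i.i.d. circularly symmetric standard complex Gaussian entries, λ, μ > 0. Then there exists an optimal S* of the form S* = A Σ A† with Σ diagonal; i.e., the optimal transmit covariance is diagonalized by the eigenvectors of the transmit correlation matrix Q. -/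
open scoped Matrix ComplexOrder
open MeasureTheory

namespace Stmt18Aux

open Matrix Finset

variable {n : Type*} [Fintype n] [DecidableEq n]

lemma birkhoff_min_le (D : Matrix n n ℝ) (hD : D ∈ doublyStochastic ℝ n) (μ β : n → ℝ) :
    ∃ σ : Equiv.Perm n,
      (∀ τ : Equiv.Perm n, (∑ i, μ i * β (σ i)) ≤ ∑ i, μ i * β (τ i)) ∧
      (∑ i, μ i * β (σ i)) ≤ ∑ i, ∑ j, μ i * D i j * β j := by
  classical
  set F : Equiv.Perm n → ℝ := fun τ => ∑ i, μ i * β (τ i) with hF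
  obtain ⟨σ, -, hσ⟩ := Finset.exists_mem_eq_inf' (s := (Finset.univ : Finset (Equiv.Perm n)))
    ⟨1, Finset.mem_univ 1⟩ F
  have hmin : ∀ τ, F σ ≤ F τ := fun τ => hσ ▸ Finset.inf'_le F (Finset.mem_univ τ)
  refine ⟨σ, hmin, ?_⟩
  obtain ⟨w, hw0, hw1, hwD⟩ := exists_eq_sum_perm_of_mem_doublyStochastic hD
  have hDij : ∀ i j, D i j = ∑ τ : Equiv.Perm n, w τ * (τ.permMatrix ℝ) i j := by
    intro i j
    rw [← hwD]
    simp [Matrix.sum_apply, Equiv.toPEquiv_apply]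
  have hperm : ∀ (τ : Equiv.Perm n) (i : n),
      (∑ j, (τ.permMatrix ℝ) i j * β j) = β (τ i) := by
    intro τ i
    have : ∀ j, (τ.permMatrix ℝ) i j = if τ i = j then 1 else 0 := by
      intro j
      simp [Equiv.Perm.permMatrix, PEquiv.toMatrix_apply, Equiv.toPEquiv_apply]
    simp [this, Equiv.toPEquiv_apply]
  have key : (∑ i, ∑ j, μ i * D i j * β j) = ∑ τ : Equiv.Perm n, w τ * F τ := by
    calc (∑ i, ∑ j, μ i * D i j * β j)
        = ∑ i, ∑ j, ∑ τ : Equiv.Perm n, μ i * (w τ * (τ.permMatrix ℝ) i j) * β j := by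
          refine Finset.sum_congr rfl fun i _ => Finset.sum_congr rfl fun j _ => ?_
          rw [hDij i j, Finset.mul_sum, Finset.sum_mul]
      _ = ∑ i, ∑ τ : Equiv.Perm n, ∑ j, μ i * (w τ * (τ.permMatrix ℝ) i j) * β j :=
          Finset.sum_congr rfl fun i _ => Finset.sum_comm
      _ = ∑ τ : Equiv.Perm n, ∑ i, ∑ j, μ i * (w τ * (τ.permMatrix ℝ) i j) * β j :=
          Finset.sum_comm
      _ = ∑ τ : Equiv.Perm n, w τ * F τ := by
          refine Finset.sum_congr rfl fun τ _ => ?_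
          rw [hF, Finset.mul_sum]
          refine Finset.sum_congr rfl fun i _ => ?_
          rw [← hperm τ i, Finset.mul_sum, Finset.mul_sum]
          refine Finset.sum_congr rfl fun j _ => by ring
  rw [key]
  calc F σ = ∑ τ : Equiv.Perm n, w τ * F σ := by
        rw [← Finset.sum_mul, hw1, one_mul]
    _ ≤ ∑ τ : Equiv.Perm n, w τ * F τ :=
        Finset.sum_le_sum fun τ _ => mul_le_mul_of_nonneg_left (hmin τ) (hw0 τ)

lemma conj_diag_apply (M : Matrix n n ℂ) (b : n → ℂ) (i k : n) :
    (M * Matrix.diagonal b * Mᴴ) i k = ∑ j, M i j * b j * star (M k j) := by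
  rw [Matrix.mul_apply]
  refine Finset.sum_congr rfl fun j _ => ?_
  rw [Matrix.mul_diagonal, Matrix.conjTranspose_apply]

lemma sandwich_mul (A X Y : Matrix n n ℂ) (h : Aᴴ * A = 1) :
    (A * X * Aᴴ) * (A * Y * Aᴴ) = A * (X * Y) * Aᴴ := by
  simp only [Matrix.mul_assoc]
  rw [← Matrix.mul_assoc Aᴴ A (Y * Aᴴ), h, Matrix.one_mul]

lemma unconj (W Dm : Matrix n n ℂ) (h1 : Wᴴ * W = 1) :
    Wᴴ * (W * Dm * Wᴴ) * W = Dm := by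
  simp only [Matrix.mul_assoc]
  rw [h1, Matrix.mul_one, ← Matrix.mul_assoc, h1, Matrix.one_mul]

end Stmt18Aux

open Stmt18Aux

/-- For the transmit-correlated Rayleigh model `H = H_w Q^{1/2}` with `H_w` having a
right-unitarily-invariant distribution (as holds for i.i.d. CSCG entries), there exists
an optimal transmit covariance of the form `S* = A Σ Aᴴ` with `Σ` diagonal, where
`Q = A Λ Aᴴ` is the eigendecomposition of the transmit correlation matrix. -/
theorem stmt_18 (tk rx : ℕ)
    {Ω : Type*} [MeasurableSpace Ω] (P : Measure Ω) [IsProbabilityMeasure P]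
    (Hw : Ω → Matrix (Fin rx) (Fin tk) ℂ)
    (hinv : ∀ U : Matrix (Fin tk) (Fin tk) ℂ, U ∈ Matrix.unitaryGroup (Fin tk) ℂ →
      ∀ φ : Matrix (Fin rx) (Fin tk) ℂ → ℝ,
        ∫ ω, φ (Hw ω * U) ∂P = ∫ ω, φ (Hw ω) ∂P)
    (Q Qsqrt A Λ : Matrix (Fin tk) (Fin tk) ℂ)
    (hQ : Q.PosSemidef) (hQs : Qsqrt.PosSemidef) (hQs2 : Qsqrt * Qsqrt = Q)
    (hA : A ∈ Matrix.unitaryGroup (Fin tk) ℂ)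
    (hΛ : ∃ d : Fin tk → ℂ, Λ = Matrix.diagonal d)
    (hdecomp : Q = A * Λ * Aᴴ)
    (lam μv : ℝ) (hlam : 0 < lam) (hμ : 0 < μv)
    (f : Matrix (Fin tk) (Fin tk) ℂ → ℝ)
    (hf : ∀ S, f S = lam * (S.trace.re) -
      μv * ∫ ω, (1 / 2) * Real.log
        (((Hw ω * Qsqrt) * S * (Hw ω * Qsqrt)ᴴ + 1).det.re) ∂P)
    (hexists : ∃ S₀ : Matrix (Fin tk) (Fin tk) ℂ,
      S₀.PosSemidef ∧ ∀ S, S.PosSemidef → f S₀ ≤ f S) :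
    ∃ Sstar : Matrix (Fin tk) (Fin tk) ℂ, Sstar.PosSemidef ∧
      (∀ S, S.PosSemidef → f Sstar ≤ f S) ∧
      ∃ d : Fin tk → ℂ, Sstar = A * Matrix.diagonal d * Aᴴ := by
  classical
  obtain ⟨S₀, hS₀, hopt⟩ := hexists
  obtain ⟨dQ, rfl⟩ := hΛ
  -- unitarity of A
  have hA1 : Aᴴ * A = 1 := by
    have := Matrix.mem_unitaryGroup_iff'.mp hA
    simpa [Matrix.star_eq_conjTranspose] using this
  have hA2 : A * Aᴴ = 1 := by
    have := Matrix.mem_unitaryGroup_iff.mp hA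
    simpa [Matrix.star_eq_conjTranspose] using this
  -- the diagonal of Λ is nonnegative real
  have hΛpsd : (Matrix.diagonal dQ).PosSemidef := by
    have hstep : Aᴴ * (A * Matrix.diagonal dQ * Aᴴ) * A = Matrix.diagonal dQ := by
      calc Aᴴ * (A * Matrix.diagonal dQ * Aᴴ) * A
          = Aᴴ * A * (Matrix.diagonal dQ * (Aᴴ * A)) := by
            simp only [Matrix.mul_assoc]
        _ = Matrix.diagonal dQ := by rw [hA1, Matrix.mul_one, Matrix.one_mul]
    have hΛeq : Matrix.diagonal dQ = Aᴴ * Q * A := by rw [hdecomp, hstep]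
    rw [hΛeq]
    exact hQ.conjTranspose_mul_mul_same A
  have hdQ0 : ∀ i, 0 ≤ dQ i := Matrix.posSemidef_diagonal_iff.mp hΛpsd
  set lv : Fin tk → ℝ := fun i => (dQ i).re with hlv
  have hlv0 : ∀ i, 0 ≤ lv i := fun i => (Complex.le_def.mp (hdQ0 i)).1
  have hdQre : ∀ i, dQ i = (lv i : ℂ) := by
    intro i
    have h := Complex.le_def.mp (hdQ0 i)
    apply Complex.ext
    · simp [hlv]
    · simp [hlv, ← h.2]
  -- the square root of Λ
  set Δ : Matrix (Fin tk) (Fin tk) ℂ :=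
    Matrix.diagonal (fun i => (Real.sqrt (lv i) : ℂ)) with hΔdef
  have hΔherm : Δᴴ = Δ := by
    rw [hΔdef, Matrix.diagonal_conjTranspose]
    refine congrArg _ (funext fun i => ?_)
    exact Complex.conj_ofReal _
  have hΔpsd : Δ.PosSemidef := by
    rw [hΔdef]
    exact Matrix.posSemidef_diagonal_iff.mpr fun i =>
      Complex.zero_le_real.mpr (Real.sqrt_nonneg _)
  have hΔΔ : Δ * Δ = Matrix.diagonal dQ := by
    rw [hΔdef, Matrix.diagonal_mul_diagonal]
    refine congrArg _ (funext fun i => ?_)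
    rw [← Complex.ofReal_mul, Real.mul_self_sqrt (hlv0 i), hdQre i]
  -- Qsqrt = A Δ Aᴴ
  have hQsqrtA : Qsqrt = A * Δ * Aᴴ := by
    open MatrixOrder in
    have h1 : Qsqrt = CFC.sqrt Q := by rw [← hQs2, ← pow_two, CFC.sqrt_sq Qsqrt hQs.nonneg]
    have hP : (A * Δ * Aᴴ).PosSemidef := hΔpsd.mul_mul_conjTranspose_same A
    have hsq : (A * Δ * Aᴴ) ^ 2 = Q := by
      rw [pow_two, sandwich_mul A Δ Δ hA1, hΔΔ, hdecomp]
    open MatrixOrder in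
    have h2 : A * Δ * Aᴴ = CFC.sqrt Q := by rw [← hsq, CFC.sqrt_sq _ hP.nonneg]
    rw [h1, h2]
  -- T and C
  set T : Matrix (Fin tk) (Fin tk) ℂ := Aᴴ * S₀ * A with hTdef
  have hT : T.PosSemidef := hS₀.conjTranspose_mul_mul_same A
  set C : Matrix (Fin tk) (Fin tk) ℂ := Δ * T * Δ with hCdef
  have hC : C.PosSemidef := by
    have h := hT.mul_mul_conjTranspose_same Δ
    rwa [hΔherm] at h
  have hQSQ : Qsqrt * S₀ * Qsqrt = A * C * Aᴴ := by
    rw [hQsqrtA, hCdef, hTdef]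
    simp only [Matrix.mul_assoc]
  -- spectral decomposition of C
  set β : Fin tk → ℝ := hC.1.eigenvalues with hβdef
  have hβ0 : ∀ j, 0 ≤ β j := fun j => hC.eigenvalues_nonneg j
  set V : Matrix (Fin tk) (Fin tk) ℂ := (hC.1.eigenvectorUnitary : Matrix (Fin tk) (Fin tk) ℂ)
    with hVdef
  have hVmem : V ∈ Matrix.unitaryGroup (Fin tk) ℂ := hC.1.eigenvectorUnitary.2
  have hV1 : Vᴴ * V = 1 := by
    have := Matrix.mem_unitaryGroup_iff'.mp hVmem
    simpa [Matrix.star_eq_conjTranspose] using this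
  have hV2 : V * Vᴴ = 1 := by
    have := Matrix.mem_unitaryGroup_iff.mp hVmem
    simpa [Matrix.star_eq_conjTranspose] using this
  have hspec : C = V * Matrix.diagonal (fun j => (β j : ℂ)) * Vᴴ := by
    have h := hC.1.spectral_theorem
    rw [← Matrix.star_eq_conjTranspose V]
    exact h
  -- the doubly stochastic matrix of squared moduli
  set D : Matrix (Fin tk) (Fin tk) ℝ := Matrix.of fun i j => Complex.normSq (V i j) with hDdef
  have hDds : D ∈ doublyStochastic ℝ (Fin tk) := by
    rw [mem_doublyStochastic_iff_sum]
    refine ⟨fun i j => Complex.normSq_nonneg _, fun i => ?_, fun j => ?_⟩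
    · have h : (V * Vᴴ) i i = (1 : Matrix (Fin tk) (Fin tk) ℂ) i i := by rw [hV2]
      rw [Matrix.mul_apply] at h
      have h2 := congrArg Complex.re h
      rw [Complex.re_sum] at h2
      simpa [Matrix.conjTranspose_apply, Complex.mul_conj, Matrix.one_apply, hDdef] using h2
    · have h : (Vᴴ * V) j j = (1 : Matrix (Fin tk) (Fin tk) ℂ) j j := by rw [hV1]
      rw [Matrix.mul_apply] at h
      have h2 := congrArg Complex.re h
      rw [Complex.re_sum] at h2
      have h3 : ∀ i, ((Vᴴ) j i * V i j).re = Complex.normSq (V i j) := by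
        intro i
        rw [Matrix.conjTranspose_apply, mul_comm]
        simp [Complex.star_def, Complex.mul_conj]
      simp only [h3] at h2
      simpa [Matrix.one_apply, hDdef] using h2
  have hCdiag : ∀ i, (C i i).re = ∑ j, D i j * β j := by
    intro i
    have h : C i i = ∑ j, V i j * (β j : ℂ) * star (V i j) := by
      rw [hspec]
      exact conj_diag_apply V _ i i
    have h2 := congrArg Complex.re h
    rw [Complex.re_sum] at h2
    rw [h2]
    refine Finset.sum_congr rfl fun j _ => ?_
    have : V i j * (β j : ℂ) * star (V i j) = ((β j : ℂ)) * (V i j * star (V i j)) := by ring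
    rw [this]
    simp [Complex.star_def, Complex.mul_conj, ← Complex.ofReal_mul, hDdef, mul_comm]
  -- weights
  set μ' : Fin tk → ℝ := fun i => if lv i = 0 then (1 + ∑ k, (lv k)⁻¹) else (lv i)⁻¹ with hμ'def
  have hμ'lt : ∀ i i', lv i = 0 → lv i' ≠ 0 → μ' i' < μ' i := by
    intro i i' h0 h1
    have hle : (lv i')⁻¹ ≤ ∑ k, (lv k)⁻¹ :=
      Finset.single_le_sum (f := fun k => (lv k)⁻¹)
        (fun k _ => inv_nonneg.mpr (hlv0 k)) (Finset.mem_univ i')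
    simp only [hμ'def, if_pos h0, if_neg h1]
    linarith
  -- the minimizing permutation
  obtain ⟨σ, hσmin, hσle⟩ := birkhoff_min_le D hDds μ' β
  -- counting: the number of nonzero eigenvalues of C is at most the size of the support of lv
  have hcount : (Finset.univ.filter fun j => β j ≠ 0).card ≤
      (Finset.univ.filter fun k => lv k ≠ 0).card := by
    have h1 : C.rank = Fintype.card {j // β j ≠ 0} := hC.1.rank_eq_card_non_zero_eigs
    have h2 : C.rank ≤ Δ.rank := by
      rw [hCdef]
      exact Matrix.rank_mul_le_right (Δ * T) Δ
    have h3 : Δ.rank = Fintype.card {i // ((Real.sqrt (lv i) : ℂ)) ≠ 0} := by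
      rw [hΔdef]
      exact Matrix.rank_diagonal _
    have h4 : Fintype.card {i // ((Real.sqrt (lv i) : ℂ)) ≠ 0}
        = Fintype.card {i // lv i ≠ 0} := by
      refine Fintype.card_congr (Equiv.subtypeEquivRight fun i => ?_)
      constructor
      · intro h hc
        exact h (by simp [hc])
      · intro h hc
        apply h
        have := Complex.ofReal_eq_zero.mp hc
        have h5 := Real.sqrt_eq_zero'.mp this
        rcases h5 with h5
        exact le_antisymm h5 (hlv0 i)
    rw [Fintype.card_subtype] at h1
    rw [Fintype.card_subtype, Fintype.card_subtype] at h4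
    rw [Fintype.card_subtype] at h3
    calc (Finset.univ.filter fun j => β j ≠ 0).card = C.rank := h1.symm
      _ ≤ Δ.rank := h2
      _ = (Finset.univ.filter fun i => ((Real.sqrt (lv i) : ℂ)) ≠ 0).card := h3
      _ = (Finset.univ.filter fun k => lv k ≠ 0).card := h4
  -- property (z): zero eigenvalues of Q receive zero eigenvalues of C
  have hz : ∀ i, lv i = 0 → β (σ i) = 0 := by
    intro i h0
    by_contra hne
    have hβpos : 0 < β (σ i) := lt_of_le_of_ne (hβ0 _) (Ne.symm hne)
    -- find i' in the support of lv with β (σ i') = 0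
    have hex : ∃ i', lv i' ≠ 0 ∧ β (σ i') = 0 := by
      by_contra hno
      push_neg at hno
      have hsub : (Finset.univ.filter fun k => lv k ≠ 0) ⊆
          (Finset.univ.filter fun k => β (σ k) ≠ 0) := by
        intro k hk
        simp only [Finset.mem_filter, Finset.mem_univ, true_and] at hk ⊢
        exact hno k hk
      have hmemi : i ∈ (Finset.univ.filter fun k => β (σ k) ≠ 0) := by
        simp only [Finset.mem_filter, Finset.mem_univ, true_and]
        exact hne
      have hnoti : i ∉ (Finset.univ.filter fun k => lv k ≠ 0) := by
        simp [h0]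
      have hlt : (Finset.univ.filter fun k => lv k ≠ 0).card <
          (Finset.univ.filter fun k => β (σ k) ≠ 0).card :=
        Finset.card_lt_card (Finset.ssubset_iff_of_subset hsub |>.mpr ⟨i, hmemi, hnoti⟩)
      have hcardeq : (Finset.univ.filter fun k => β (σ k) ≠ 0).card
          = (Finset.univ.filter fun j => β j ≠ 0).card := by
        refine Finset.card_bij (fun a _ => σ a) ?_ ?_ ?_
        · intro a ha
          simp only [Finset.mem_filter, Finset.mem_univ, true_and] at ha ⊢
          exact ha
        · intro a _ b _ hab
          exact σ.injective hab
        · intro b hb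
          refine ⟨σ.symm b, ?_, by simp⟩
          simp only [Finset.mem_filter, Finset.mem_univ, true_and] at hb ⊢
          simpa using hb
      omega
    obtain ⟨i', hi'1, hi'2⟩ := hex
    have hii' : i ≠ i' := fun h => hi'1 (h ▸ h0)
    set τ : Equiv.Perm (Fin tk) := σ * Equiv.swap i i' with hτdef
    -- compute F τ
    have hFτ : (∑ k, μ' k * β (τ k)) = ∑ k, μ' (Equiv.swap i i' k) * β (σ k) := by
      have h1 : ∀ k, τ k = σ (Equiv.swap i i' k) := fun k => rfl
      simp only [h1]
      exact Fintype.sum_equiv (Equiv.swap i i')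
        (fun k => μ' k * β (σ (Equiv.swap i i' k)))
        (fun k => μ' (Equiv.swap i i' k) * β (σ k))
        (fun k => by simp)
    have hdiff : (∑ k, μ' k * β (σ k)) - (∑ k, μ' k * β (τ k))
        = (μ' i - μ' i') * β (σ i) := by
      rw [hFτ, ← Finset.sum_sub_distrib]
      have hsupp : ∀ k ∈ (Finset.univ : Finset (Fin tk)), k ∉ ({i, i'} : Finset (Fin tk)) →
          μ' k * β (σ k) - μ' (Equiv.swap i i' k) * β (σ k) = 0 := by
        intro k _ hk
        simp only [Finset.mem_insert, Finset.mem_singleton, not_or] at hk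
        rw [Equiv.swap_apply_of_ne_of_ne hk.1 hk.2]
        ring
      rw [← Finset.sum_subset (Finset.subset_univ ({i, i'} : Finset (Fin tk))) hsupp]
      rw [Finset.sum_pair hii']
      rw [Equiv.swap_apply_left, Equiv.swap_apply_right, hi'2]
      ring
    have hlt : μ' i' < μ' i := hμ'lt i i' h0 hi'1
    have : (0:ℝ) < (∑ k, μ' k * β (σ k)) - (∑ k, μ' k * β (τ k)) := by
      rw [hdiff]
      exact mul_pos (by linarith) hβpos
    have := hσmin τ
    linarith
  -- construction of the optimal diagonal-form matrix
  set dstar : Fin tk → ℂ := fun i => ((β (σ i) / lv i : ℝ) : ℂ) with hdstardef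
  have hdstar0 : ∀ i, 0 ≤ β (σ i) / lv i := fun i => div_nonneg (hβ0 _) (hlv0 i)
  set Sstar : Matrix (Fin tk) (Fin tk) ℂ := A * Matrix.diagonal dstar * Aᴴ with hSstardef
  have hSstarPSD : Sstar.PosSemidef := by
    rw [hSstardef]
    exact (Matrix.posSemidef_diagonal_iff.mpr fun i =>
      Complex.zero_le_real.mpr (hdstar0 i)).mul_mul_conjTranspose_same A
  -- Δ (diagonal dstar) Δ = diagonal (β ∘ σ)
  have hΔdΔ : Δ * Matrix.diagonal dstar * Δ = Matrix.diagonal (fun j => (β (σ j) : ℂ)) := by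
    rw [hΔdef, hdstardef, Matrix.diagonal_mul_diagonal, Matrix.diagonal_mul_diagonal]
    refine congrArg _ (funext fun i => ?_)
    by_cases h0 : lv i = 0
    · simp [h0, hz i h0]
    · have hs : Real.sqrt (lv i) * (β (σ i) / lv i) * Real.sqrt (lv i) = β (σ i) := by
        rw [mul_comm (Real.sqrt (lv i)) _, mul_assoc, Real.mul_self_sqrt (hlv0 i)]
        field_simp
      rw [← Complex.ofReal_mul, ← Complex.ofReal_mul, hs]
  -- the permuted eigenvector matrix
  set W : Matrix (Fin tk) (Fin tk) ℂ := V.submatrix id ⇑σ with hWdef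
  have hW1 : Wᴴ * W = 1 := by
    rw [hWdef, Matrix.conjTranspose_submatrix]
    rw [← Matrix.submatrix_mul Vᴴ V ⇑σ id ⇑σ Function.bijective_id]
    rw [hV1]
    exact Matrix.submatrix_one_equiv σ
  have hW2 : W * Wᴴ = 1 := mul_eq_one_comm.mp hW1
  have hWC : C = W * Matrix.diagonal (fun j => (β (σ j) : ℂ)) * Wᴴ := by
    rw [hspec]
    ext i k
    rw [conj_diag_apply, conj_diag_apply]
    have : ∀ j, W i j * (β (σ j) : ℂ) * star (W k j)
        = (fun j => V i j * (β j : ℂ) * star (V k j)) (σ j) := by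
      intro j
      simp [hWdef]
    simp only [this]
    exact (Equiv.sum_comp σ (fun j => V i j * (β j : ℂ) * star (V k j))).symm
  -- the unitary U
  set U : Matrix (Fin tk) (Fin tk) ℂ := A * Wᴴ * Aᴴ with hUdef
  have hWmem : W ∈ Matrix.unitaryGroup (Fin tk) ℂ := by
    rw [Matrix.mem_unitaryGroup_iff']
    rw [Matrix.star_eq_conjTranspose]
    exact hW1
  have hUmem : U ∈ Matrix.unitaryGroup (Fin tk) ℂ := by
    rw [hUdef]
    have h1 : Wᴴ ∈ Matrix.unitaryGroup (Fin tk) ℂ := by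
      rw [← Matrix.star_eq_conjTranspose]
      exact Unitary.star_mem hWmem
    have h2 : Aᴴ ∈ Matrix.unitaryGroup (Fin tk) ℂ := by
      rw [← Matrix.star_eq_conjTranspose]
      exact Unitary.star_mem hA
    exact mul_mem (mul_mem hA h1) h2
  have hUH : Uᴴ = A * W * Aᴴ := by
    rw [hUdef]
    simp only [Matrix.conjTranspose_mul, Matrix.conjTranspose_conjTranspose]
    simp only [Matrix.mul_assoc]
  -- key conjugation identity
  have hconj : Qsqrt * Sstar * Qsqrt = U * (Qsqrt * S₀ * Qsqrt) * Uᴴ := by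
    rw [hQSQ, hSstardef, hQsqrtA, hUdef, hUH]
    calc (A * Δ * Aᴴ) * (A * Matrix.diagonal dstar * Aᴴ) * (A * Δ * Aᴴ)
        = (A * (Δ * Matrix.diagonal dstar) * Aᴴ) * (A * Δ * Aᴴ) := by
          rw [sandwich_mul A Δ (Matrix.diagonal dstar) hA1]
      _ = A * (Δ * Matrix.diagonal dstar * Δ) * Aᴴ := by
          rw [sandwich_mul A (Δ * Matrix.diagonal dstar) Δ hA1]
      _ = A * (Wᴴ * C * W) * Aᴴ := by
          rw [hΔdΔ, hWC, unconj W _ hW1]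
      _ = (A * (Wᴴ * C) * Aᴴ) * (A * W * Aᴴ) := by
          rw [sandwich_mul A (Wᴴ * C) W hA1, Matrix.mul_assoc Wᴴ C W]
      _ = (A * Wᴴ * Aᴴ) * (A * C * Aᴴ) * (A * W * Aᴴ) := by
          rw [sandwich_mul A Wᴴ C hA1]
  -- trace computations
  have hTdiag0 : ∀ i, 0 ≤ (T i i).re := by
    intro i
    have h := hT.dotProduct_mulVec_nonneg (Pi.single i 1)
    have he : (star (Pi.single i (1:ℂ)) ⬝ᵥ T.mulVec (Pi.single i 1)) = T i i := by
      simp [dotProduct, Matrix.mulVec, Pi.single_apply, Finset.sum_ite_eq,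
        apply_ite, mul_comm]
    rw [he] at h
    exact (Complex.le_def.mp h).1
  have hCTdiag : ∀ i, (C i i).re = lv i * (T i i).re := by
    intro i
    have h : C i i = ((lv i : ℝ) : ℂ) * T i i := by
      calc C i i = (Real.sqrt (lv i) : ℂ) * T i i * (Real.sqrt (lv i) : ℂ) := by
            rw [hCdef, hΔdef, Matrix.mul_diagonal, Matrix.diagonal_mul]
        _ = ((Real.sqrt (lv i) * Real.sqrt (lv i) : ℝ) : ℂ) * T i i := by
            push_cast
            ring
        _ = ((lv i : ℝ) : ℂ) * T i i := by rw [Real.mul_self_sqrt (hlv0 i)]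
    rw [h]
    rw [Complex.re_ofReal_mul]
  have htrSstar : Sstar.trace.re = ∑ i, μ' i * β (σ i) := by
    have h1 : Sstar.trace = ∑ i, dstar i := by
      rw [hSstardef, Matrix.trace_mul_cycle, hA1, Matrix.one_mul, Matrix.trace_diagonal]
    rw [h1, Complex.re_sum]
    refine Finset.sum_congr rfl fun i _ => ?_
    rw [hdstardef]
    simp only [Complex.ofReal_re]
    by_cases h0 : lv i = 0
    · simp [h0, hz i h0]
    · rw [hμ'def]
      simp only [if_neg h0]
      rw [div_eq_mul_inv, mul_comm]
  have htrS0 : S₀.trace.re = ∑ i, (T i i).re := by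
    have h1 : T.trace = S₀.trace := by
      rw [hTdef, Matrix.trace_mul_cycle, hA2, Matrix.one_mul]
    rw [← h1]
    rw [Matrix.trace]
    rw [Complex.re_sum]
    rfl
  have htr_le : Sstar.trace.re ≤ S₀.trace.re := by
    have e2 : (∑ i, ∑ j, μ' i * D i j * β j) = ∑ i, μ' i * (C i i).re := by
      refine Finset.sum_congr rfl fun i _ => ?_
      rw [hCdiag i, Finset.mul_sum]
      exact Finset.sum_congr rfl fun j _ => by ring
    have e3 : ∀ i, μ' i * (C i i).re ≤ (T i i).re := by
      intro i
      rw [hCTdiag i]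
      by_cases h0 : lv i = 0
      · simp [h0]
        exact hTdiag0 i
      · rw [hμ'def]
        simp only [if_neg h0]
        rw [← mul_assoc, inv_mul_cancel₀ h0, one_mul]
    calc Sstar.trace.re = ∑ i, μ' i * β (σ i) := htrSstar
      _ ≤ ∑ i, ∑ j, μ' i * D i j * β j := hσle
      _ = ∑ i, μ' i * (C i i).re := e2
      _ ≤ ∑ i, (T i i).re := Finset.sum_le_sum fun i _ => e3 i
      _ = S₀.trace.re := htrS0.symm
  -- the integral terms agree, by unitary invariance
  have hptwise : ∀ ω, Hw ω * Qsqrt * Sstar * (Hw ω * Qsqrt)ᴴ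
      = Hw ω * U * Qsqrt * S₀ * (Hw ω * U * Qsqrt)ᴴ := by
    intro ω
    have hQh : Qsqrtᴴ = Qsqrt := hQs.1
    calc Hw ω * Qsqrt * Sstar * (Hw ω * Qsqrt)ᴴ
        = Hw ω * (Qsqrt * Sstar * Qsqrt) * (Hw ω)ᴴ := by
          rw [Matrix.conjTranspose_mul, hQh]
          simp only [Matrix.mul_assoc]
      _ = Hw ω * (U * (Qsqrt * S₀ * Qsqrt) * Uᴴ) * (Hw ω)ᴴ := by rw [hconj]
      _ = Hw ω * U * Qsqrt * S₀ * (Hw ω * U * Qsqrt)ᴴ := by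
          rw [Matrix.conjTranspose_mul (Hw ω * U) Qsqrt, hQh,
            Matrix.conjTranspose_mul (Hw ω) U]
          simp only [Matrix.mul_assoc]
  have hint : (∫ ω, (1 / 2) * Real.log
        ((Hw ω * Qsqrt * Sstar * (Hw ω * Qsqrt)ᴴ + 1).det.re) ∂P)
      = ∫ ω, (1 / 2) * Real.log
        ((Hw ω * Qsqrt * S₀ * (Hw ω * Qsqrt)ᴴ + 1).det.re) ∂P := by
    have h2 : ∀ ω, (1 / 2 : ℝ) * Real.log
        ((Hw ω * Qsqrt * Sstar * (Hw ω * Qsqrt)ᴴ + 1).det.re)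
        = (fun M => (1 / 2 : ℝ) * Real.log
            ((M * Qsqrt * S₀ * (M * Qsqrt)ᴴ + 1).det.re)) (Hw ω * U) := by
      intro ω
      simp only []
      rw [hptwise ω]
    calc (∫ ω, (1 / 2) * Real.log
          ((Hw ω * Qsqrt * Sstar * (Hw ω * Qsqrt)ᴴ + 1).det.re) ∂P)
        = ∫ ω, (fun M => (1 / 2 : ℝ) * Real.log
            ((M * Qsqrt * S₀ * (M * Qsqrt)ᴴ + 1).det.re)) (Hw ω * U) ∂P := by
          simp only [h2]
      _ = ∫ ω, (fun M => (1 / 2 : ℝ) * Real.log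
            ((M * Qsqrt * S₀ * (M * Qsqrt)ᴴ + 1).det.re)) (Hw ω) ∂P :=
          hinv U hUmem (fun M => (1 / 2 : ℝ) * Real.log
            ((M * Qsqrt * S₀ * (M * Qsqrt)ᴴ + 1).det.re))
      _ = ∫ ω, (1 / 2) * Real.log
            ((Hw ω * Qsqrt * S₀ * (Hw ω * Qsqrt)ᴴ + 1).det.re) ∂P := rfl
  -- conclusion
  refine ⟨Sstar, hSstarPSD, ?_, dstar, hSstardef⟩
  intro S hS
  have hfle : f Sstar ≤ f S₀ := by
    rw [hf Sstar, hf S₀, hint]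
    have h := mul_le_mul_of_nonneg_left htr_le hlam.le
    linarith
  exact hfle.trans (hopt S hS)
end
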